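/- Let φ_∞ ≥ 0, β > 0, C ≥ 0, and φ : [0,∞) → [0,φ_∞] nondecreasing and absolutely continuous with φ(0)=0. Suppose y : [0,∞) → [0,∞) is absolutely continuous and satisfies y'(t) + β y(t) ≤ C φ'(t) y(t) + C(φ'(t) + 1) for a.e. t. Then y(t) ≤ y(0) e^{C φ_∞} + C e^{C φ_∞} (1/β + φ_∞) for all t ≥ 0. -/

import Mathlib

open MeasureTheory Set Real

/-!
With `E(s) = e^{β s - C φ(s)}` one has `(E y)' = E (y' + β y - C φ' y) ≤ E C (φ' + 1)
≤ e^{β s} C (φ' + 1)`, and the right-hand side is dominated by the derivative of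
`(y(0) + C/β + C φ(s)) e^{β s}`. So the difference of the two is nonincreasing, which avoids
integrating `φ'`. It equals `-C/β` at `0`, so dividing by `E(t)` gives
`y(t) ≤ (y(0) + C/β + C φ(t)) e^{C φ(t)}`, and `φ(t) ≤ φ∞` finishes.
-/

theorem le_of_hasDeriv_right_of_ae_nonpos {f f' : ℝ → ℝ} {a b : ℝ} (hab : a ≤ b)
    (hf : ContinuousOn f (Icc a b)) (hderiv : ∀ x ∈ Ioo a b, HasDerivWithinAt f (f' x) (Ioi x) x)
    (hf' : ∀ᵐ x ∂volume.restrict (Ioo a b), f' x ≤ 0) : f b ≤ f a := by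
  -- `max f' 0` is an integrable upper bound for `f'` that vanishes a.e.
  have hmax : (fun x ↦ max (f' x) 0) =ᵐ[volume.restrict (Ioo a b)] 0 := by
    filter_upwards [hf'] with x hx using max_eq_right hx
  have hint : IntegrableOn (fun x ↦ max (f' x) 0) (Icc a b) :=
    (integrableOn_Icc_iff_integrableOn_Ioo).2 ((integrable_zero _ _ _).congr hmax.symm)
  have h := intervalIntegral.sub_le_integral_of_hasDeriv_right_of_le hab hf hderiv hint
    fun x _ ↦ le_max_left _ _
  rw [intervalIntegral.integral_of_le hab, integral_Ioc_eq_integral_Ioo,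
    integral_congr_ae hmax] at h
  simpa using h

section Comparison

variable {β C : ℝ} {y φ : ℝ → ℝ}

noncomputable def gronwallComparison (β C : ℝ) (y φ : ℝ → ℝ) (s : ℝ) : ℝ :=
  y s * exp (β * s - C * φ s) - (y 0 + C / β + C * φ s) * exp (β * s)

theorem hasDerivAt_gronwallComparison {s dy dφ : ℝ} (hy : HasDerivAt y dy s)
    (hφ : HasDerivAt φ dφ s) :
    HasDerivAt (gronwallComparison β C y φ)
      (exp (β * s - C * φ s) * (dy + β * y s - C * dφ * y s) -
        exp (β * s) * (C * dφ + β * (y 0 + C / β + C * φ s))) s := by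
  have hE : HasDerivAt (fun u ↦ exp (β * u - C * φ u))
      (exp (β * s - C * φ s) * (β - C * dφ)) s :=
    (((hasDerivAt_id s).const_mul β).sub (hφ.const_mul C)).exp.congr_deriv (by simp)
  have hF : HasDerivAt (fun u ↦ exp (β * u)) (exp (β * s) * β) s :=
    ((hasDerivAt_id s).const_mul β).exp.congr_deriv (by simp)
  have hP : HasDerivAt (fun u ↦ y 0 + C / β + C * φ u) (C * dφ) s :=
    (hφ.const_mul C).const_add _
  exact ((hy.mul hE).sub (hP.mul hF)).congr_deriv (by ring)

theorem gronwallComparison_deriv_nonpos {s dy dφ : ℝ} (hβ : 0 < β) (hC : 0 ≤ C)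
    (hy0 : 0 ≤ y 0) (hφs : 0 ≤ φ s) (hdφ : 0 ≤ dφ)
    (h : dy + β * y s ≤ C * dφ * y s + C * (dφ + 1)) :
    exp (β * s - C * φ s) * (dy + β * y s - C * dφ * y s) -
      exp (β * s) * (C * dφ + β * (y 0 + C / β + C * φ s)) ≤ 0 := by
  have hCβ : β * (C / β) = C := mul_div_cancel₀ C hβ.ne'
  refine sub_nonpos.2 ?_
  calc exp (β * s - C * φ s) * (dy + β * y s - C * dφ * y s)
      ≤ exp (β * s - C * φ s) * (C * (dφ + 1)) := by gcongr; linarith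
    _ ≤ exp (β * s) * (C * (dφ + 1)) := by gcongr; nlinarith
    _ ≤ exp (β * s) * (C * dφ + β * (y 0 + C / β + C * φ s)) := by
        gcongr; nlinarith [mul_nonneg hβ.le hy0, mul_nonneg hβ.le (mul_nonneg hC hφs)]

theorem gronwallComparison_zero (hφ0 : φ 0 = 0) : gronwallComparison β C y φ 0 = -(C / β) := by
  simp [gronwallComparison, hφ0]

theorem le_of_gronwallComparison_nonpos {t : ℝ} (h : gronwallComparison β C y φ t ≤ 0) :
    y t ≤ (y 0 + C / β + C * φ t) * exp (C * φ t) := by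
  have hsplit : exp (β * t) = exp (C * φ t) * exp (β * t - C * φ t) := by
    rw [← exp_add]; ring_nf
  rw [gronwallComparison, sub_nonpos, hsplit, ← mul_assoc] at h
  exact le_of_mul_le_mul_right h (exp_pos _)

end Comparison

theorem stmt14_general (β C φinf : ℝ) (hβ : 0 < β) (hC : 0 ≤ C)
    (y y' φ φ' : ℝ → ℝ)
    (hy : ∀ t, 0 ≤ t → 0 ≤ y t)
    (hφ0 : φ 0 = 0)
    (hφbd : ∀ t, 0 ≤ t → φ t ∈ Set.Icc 0 φinf)
    (hφmono : MonotoneOn φ (Set.Ici 0))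
    (hφd : ∀ t, 0 ≤ t → HasDerivAt φ (φ' t) t)
    (hyd : ∀ t, 0 ≤ t → HasDerivAt y (y' t) t)
    (hineq : ∀ᵐ t ∂(volume.restrict (Set.Ioi (0:ℝ))),
      y' t + β * y t ≤ C * φ' t * y t + C * (φ' t + 1)) :
    ∀ t, 0 ≤ t → y t ≤ y 0 * Real.exp (C * φinf) +
      C * Real.exp (C * φinf) * (1 / β + φinf) := by
  intro t ht
  have hy0 : 0 ≤ y 0 := hy 0 le_rfl
  have hderiv (s : ℝ) (hs : 0 ≤ s) :=
    hasDerivAt_gronwallComparison (β := β) (C := C) (hyd s hs) (hφd s hs)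
  have hφ' (s : ℝ) (hs : 0 ≤ s) : 0 ≤ φ' s :=
    (hφd s hs).hasDerivWithinAt.nonneg_of_monotoneOn (uniqueDiffOn_Ici 0 s hs).accPt hφmono
  have hdecr : gronwallComparison β C y φ t ≤ gronwallComparison β C y φ 0 := by
    refine le_of_hasDeriv_right_of_ae_nonpos ht
      (fun s hs ↦ (hderiv s hs.1).continuousAt.continuousWithinAt)
      (fun s hs ↦ (hderiv s hs.1.le).hasDerivWithinAt) ?_
    filter_upwards [ae_restrict_of_ae_restrict_of_subset Ioo_subset_Ioi_self hineq,
      ae_restrict_mem measurableSet_Ioo] with s hs hsI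
    exact gronwallComparison_deriv_nonpos hβ hC hy0 (hφbd s hsI.1.le).1
      (hφ' s hsI.1.le) hs
  have hnonpos : gronwallComparison β C y φ t ≤ 0 := by
    rw [gronwallComparison_zero hφ0] at hdecr
    linarith [div_nonneg hC hβ.le]
  calc y t ≤ (y 0 + C / β + C * φ t) * exp (C * φ t) := le_of_gronwallComparison_nonpos hnonpos
    _ ≤ (y 0 + C / β + C * φinf) * exp (C * φinf) := by
        obtain ⟨hφt, hφt_le⟩ := hφbd t ht
        have hφinf : 0 ≤ φinf := hφt.trans hφt_le
        gcongr
    _ = y 0 * Real.exp (C * φinf) + C * Real.exp (C * φinf) * (1 / β + φinf) := by ring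

/-- Gronwall-type inequality with `L¹`-in-time coefficient: if
`y' + β y ≤ C φ' y + C (φ' + 1)` a.e., with `φ` nondecreasing,
`0 ≤ φ ≤ φ∞` and `φ(0) = 0`, then
`y(t) ≤ y(0) e^{C φ∞} + C e^{C φ∞} (1/β + φ∞)` for all `t ≥ 0`. -/
theorem stmt14 (β C φinf : ℝ) (hβ : 0 < β) (hC : 0 ≤ C) (hφinf : 0 ≤ φinf)
    (y y' φ φ' : ℝ → ℝ)
    (hy : ∀ t, 0 ≤ t → 0 ≤ y t)
    (hφ0 : φ 0 = 0)
    (hφbd : ∀ t, 0 ≤ t → φ t ∈ Set.Icc 0 φinf)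
    (hφmono : MonotoneOn φ (Set.Ici 0))
    (hφd : ∀ t, 0 ≤ t → HasDerivAt φ (φ' t) t)
    (hyd : ∀ t, 0 ≤ t → HasDerivAt y (y' t) t)
    (hineq : ∀ᵐ t ∂(volume.restrict (Set.Ioi (0:ℝ))),
      y' t + β * y t ≤ C * φ' t * y t + C * (φ' t + 1)) :
    ∀ t, 0 ≤ t → y t ≤ y 0 * Real.exp (C * φinf) +
      C * Real.exp (C * φinf) * (1 / β + φinf) :=
  stmt14_general β C φinf hβ hC y y' φ φ' hy hφ0 hφbd hφmono hφd hyd hineq
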